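/- Let G and H be finite connected simple graphs, each of order at least two, that are not both complete. Then mobmv(G ∨ H) = n(G) + n(H) − 1 if and only if either (mobmv(G) ≥ n(G) − 1 or mobmv(H) ≥ n(H) − 1), or (μ(G) = n(G) − 1 and μ(H) = n(H) − 1); otherwise mobmv(G ∨ H) = n(G) + n(H) − 2. -/

import Mathlib

open SimpleGraph

variable {V : Type*} {W : Type*}

/-- `S` is a general position set of `G`: no shortest path of `G` contains more than two
vertices of `S`. -/
def IsGenPosSet (G : SimpleGraph V) (S : Set V) : Prop :=
  ∀ ⦃u v : V⦄ (p : G.Walk u v), p.IsPath → p.length = G.dist u v →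
    (S ∩ {x | x ∈ p.support}).ncard ≤ 2

/-- `S` is a mutual visibility set of `G`: any two vertices of `S` are joined by a shortest
path containing no further vertex of `S`. -/
def IsMutVisSet (G : SimpleGraph V) (S : Set V) : Prop :=
  ∀ ⦃u⦄, u ∈ S → ∀ ⦃v⦄, v ∈ S → ∃ p : G.Walk u v,
    p.IsPath ∧ p.length = G.dist u v ∧ ∀ x ∈ p.support, x ∈ S → x = u ∨ x = v

/-- A legal move (with respect to the position property `P`) of a configuration of `t` robots
on distinct vertices: one robot moves to an adjacent unoccupied vertex, and the resulting set
of occupied vertices again satisfies `P`. -/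
def LegalMove (G : SimpleGraph V) (P : Set V → Prop) {t : ℕ} (f g : Fin t ↪ V) : Prop :=
  ∃ i : Fin t, G.Adj (f i) (g i) ∧ g i ∉ Set.range ⇑f ∧ (∀ j, j ≠ i → g j = f j) ∧
    P (Set.range ⇑g)

/-- A configuration is a mobile `P`-configuration if it satisfies `P` and there is a sequence
of legal moves starting from it such that every vertex is visited by some robot. -/
def IsMobileConfig (G : SimpleGraph V) (P : Set V → Prop) {t : ℕ} (f : Fin t ↪ V) : Prop :=
  P (Set.range ⇑f) ∧ ∃ (N : ℕ) (c : ℕ → (Fin t ↪ V)), c 0 = f ∧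
    (∀ k < N, LegalMove G P (c k) (c (k + 1))) ∧ ∀ v : V, ∃ k ≤ N, ∃ i, c k i = v

/-- A configuration is completely mobile if it is mobile and moreover every robot can visit
every vertex via a sequence of legal moves. -/
def IsCompletelyMobileConfig (G : SimpleGraph V) (P : Set V → Prop) {t : ℕ}
    (f : Fin t ↪ V) : Prop :=
  IsMobileConfig G P f ∧ ∀ (v : V) (i : Fin t), ∃ (N : ℕ) (c : ℕ → (Fin t ↪ V)), c 0 = f ∧
    (∀ k < N, LegalMove G P (c k) (c (k + 1))) ∧ ∃ k ≤ N, c k i = v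

/-- The mobile general position number `mob(G)`. -/
noncomputable def mobGP (G : SimpleGraph V) : ℕ :=
  sSup {t : ℕ | ∃ f : Fin t ↪ V, IsMobileConfig G (IsGenPosSet G) f}

/-- The completely mobile general position number `mob*(G)`. -/
noncomputable def cmobGP (G : SimpleGraph V) : ℕ :=
  sSup {t : ℕ | ∃ f : Fin t ↪ V, IsCompletelyMobileConfig G (IsGenPosSet G) f}

/-- The mobile mutual visibility number `mobmv(G)`. -/
noncomputable def mobMV (G : SimpleGraph V) : ℕ :=
  sSup {t : ℕ | ∃ f : Fin t ↪ V, IsMobileConfig G (IsMutVisSet G) f}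

/-- The completely mobile mutual visibility number `mobmv*(G)`. -/
noncomputable def cmobMV (G : SimpleGraph V) : ℕ :=
  sSup {t : ℕ | ∃ f : Fin t ↪ V, IsCompletelyMobileConfig G (IsMutVisSet G) f}

/-- The mutual visibility number `μ(G)`. -/
noncomputable def muMV (G : SimpleGraph V) : ℕ :=
  sSup {n : ℕ | ∃ S : Set V, IsMutVisSet G S ∧ S.ncard = n}

/-- `μ₂(G)`: the largest cardinality of a mutual visibility set whose vertices are pairwise at
distance at most `2`. -/
noncomputable def muMV2 (G : SimpleGraph V) : ℕ :=
  sSup {n : ℕ | ∃ S : Set V, IsMutVisSet G S ∧ (∀ u ∈ S, ∀ v ∈ S, G.dist u v ≤ 2) ∧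
    S.ncard = n}

/-- The join `G ∨ H` of two graphs: the disjoint union together with all edges between the
two vertex sets. -/
def graphJoin (G : SimpleGraph V) (H : SimpleGraph W) : SimpleGraph (V ⊕ W) where
  Adj x y := match x, y with
    | Sum.inl a, Sum.inl b => G.Adj a b
    | Sum.inr a, Sum.inr b => H.Adj a b
    | Sum.inl _, Sum.inr _ => True
    | Sum.inr _, Sum.inl _ => True
  symm := ⟨by rintro (a | a) (b | b) h <;> simp_all <;> exact h.symm⟩
  loopless := ⟨by rintro (a | a) h <;> simp_all⟩

/-- The strong product `G ⊠ H` of two graphs. -/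
def strongProd (G : SimpleGraph V) (H : SimpleGraph W) : SimpleGraph (V × W) where
  Adj x y := (x.1 = y.1 ∧ H.Adj x.2 y.2) ∨ (x.2 = y.2 ∧ G.Adj x.1 y.1) ∨
    (G.Adj x.1 y.1 ∧ H.Adj x.2 y.2)
  symm := ⟨by
    rintro ⟨a, b⟩ ⟨c, d⟩ (⟨h1, h2⟩ | ⟨h1, h2⟩ | ⟨h1, h2⟩)
    · exact Or.inl ⟨h1.symm, h2.symm⟩
    · exact Or.inr (Or.inl ⟨h1.symm, h2.symm⟩)
    · exact Or.inr (Or.inr ⟨h1.symm, h2.symm⟩)⟩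
  loopless := ⟨by rintro ⟨a, b⟩ (⟨_, h⟩ | ⟨_, h⟩ | ⟨h, _⟩) <;> simp_all⟩

/-- A vertex `u` is a hub if any two distinct non-adjacent vertices different from `u` are
both adjacent to `u`. -/
def IsHub (G : SimpleGraph V) (u : V) : Prop :=
  ∀ ⦃w₁ w₂ : V⦄, w₁ ≠ u → w₂ ≠ u → w₁ ≠ w₂ → ¬G.Adj w₁ w₂ → G.Adj w₁ u ∧ G.Adj w₂ u

/-- A block graph: every block is complete; equivalently, the vertices of any cycle form a
clique. -/
def IsBlockGraph (G : SimpleGraph V) : Prop :=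
  ∀ (v : V) (c : G.Walk v v), c.IsCycle → G.IsClique {x | x ∈ c.support}

/-- The graph obtained from the complete graph `K n` (on vertices `1, ..., n`) by attaching
one pendant vertex `0`, adjacent only to vertex `1`. -/
def cliqueWithLeaf (n : ℕ) : SimpleGraph (Fin (n + 1)) :=
  SimpleGraph.fromRel (fun i j => (i ≠ 0 ∧ j ≠ 0) ∨ (i = 0 ∧ j = 1))

/-- `G` is (isomorphic to) a path graph. -/
def IsPathGraph (G : SimpleGraph V) : Prop :=
  ∃ n : ℕ, Nonempty (G ≃g pathGraph n)


/-!
Deleting one vertex `x` leaves a mutual-visibility set exactly when `x` is a hub, and the whole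
vertex set is one only in a complete graph. Hence `n - 1` robots are mobile iff the graph has two
adjacent hubs (the hole can only be filled from a neighbour, which then becomes the hole), and
`μ = n - 1` iff the graph is not complete but has a hub. In `G ∨ H` any two vertices on different
sides are adjacent, so the hubs of the join are those of `G` and of `H`. Any set missing one
vertex on each side is a mutual-visibility set of the join, which lets `n - 2` robots visit
everything using one edge of `G` and one edge of `H`.
-/

section MutualVisibility

variable {U : Type*} {K : SimpleGraph U} {S : Set U} {u v x : U}

def HasAdjacentHubs (K : SimpleGraph U) : Prop :=
  ∃ x y, K.Adj x y ∧ IsHub K x ∧ IsHub K y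

lemma isHub_top (x : U) : IsHub (⊤ : SimpleGraph U) x :=
  fun _ _ _ _ hne hna => absurd ((top_adj _ _).2 hne) hna

lemma hasAdjacentHubs_top [Nontrivial U] : HasAdjacentHubs (⊤ : SimpleGraph U) :=
  let ⟨x, y, hxy⟩ := exists_pair_ne U
  ⟨x, y, (top_adj x y).2 hxy, isHub_top x, isHub_top y⟩

lemma IsMutVisSet.exists_adj (h : IsMutVisSet K S) (hu : u ∈ S) (hv : v ∈ S) (huv : u ≠ v) :
    ∃ a, K.Adj u a ∧ (a = v ∨ a ∉ S) := by
  obtain ⟨p, -, -, hp⟩ := h hu hv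
  cases p with
  | nil => exact absurd rfl huv
  | @cons _ a _ hadj q =>
    refine ⟨a, hadj, or_iff_not_imp_right.2 fun haS => ?_⟩
    exact (hp a (by simp) (not_not.1 haS)).resolve_left hadj.ne'

lemma isMutVisSet_of_forall_exists_common_adj
    (h : ∀ u ∈ S, ∀ v ∈ S, u ≠ v → ¬K.Adj u v → ∃ m ∉ S, K.Adj u m ∧ K.Adj m v) :
    IsMutVisSet K S := by
  intro u hu v hv
  by_cases huv : u = v
  · subst huv
    exact ⟨.nil, .nil, by simp, by simp⟩
  by_cases hadj : K.Adj u v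
  · exact ⟨.cons hadj .nil, by simp [huv], by simp [dist_eq_one_iff_adj.2 hadj], by simp⟩
  obtain ⟨m, hmS, hum, hmv⟩ := h u hu v hv huv hadj
  let p : K.Walk u v := .cons hum (.cons hmv .nil)
  have hdist : K.dist u v = 2 :=
    le_antisymm (dist_le p) (Reachable.one_lt_dist_of_ne_of_not_adj ⟨p⟩ huv hadj)
  refine ⟨p, by simp [p, huv, hum.ne, hmv.ne], by simp [p, hdist], ?_⟩
  simp only [p, Walk.support_cons, Walk.support_nil, List.mem_cons, List.not_mem_nil]
  rintro w (rfl | rfl | rfl | h) hwS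
  exacts [Or.inl rfl, absurd hwS hmS, Or.inr rfl, h.elim]

lemma isMutVisSet_univ_iff : IsMutVisSet K Set.univ ↔ K = ⊤ := by
  refine ⟨fun h => ?_, fun h => isMutVisSet_of_forall_exists_common_adj ?_⟩
  · ext u v
    refine ⟨Adj.ne, fun huv => ?_⟩
    obtain ⟨a, hadj, rfl | ha⟩ := h.exists_adj (Set.mem_univ u) (Set.mem_univ v) huv
    exacts [hadj, absurd (Set.mem_univ a) ha]
  · subst h
    exact fun u _ v _ huv hna => absurd ((top_adj u v).2 huv) hna

lemma isMutVisSet_compl_singleton_iff : IsMutVisSet K {x}ᶜ ↔ IsHub K x := by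
  refine ⟨fun h w₁ w₂ h₁ h₂ hne hna => ?_, fun hx => ?_⟩
  · have adj_x : ∀ ⦃u v⦄, u ≠ x → v ≠ x → u ≠ v → ¬K.Adj u v → K.Adj u x := by
      intro u v hu hv huv hna
      obtain ⟨a, hadj, rfl | ha⟩ := h.exists_adj hu hv huv
      exacts [absurd hadj hna, (by simpa using ha : a = x) ▸ hadj]
    exact ⟨adj_x h₁ h₂ hne hna, adj_x h₂ h₁ hne.symm fun h => hna h.symm⟩
  · refine isMutVisSet_of_forall_exists_common_adj fun u hu v hv huv hna => ?_
    obtain ⟨hux, hvx⟩ := hx hu hv huv hna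
    exact ⟨x, by simp, hux, hvx.symm⟩

lemma IsMutVisSet.ncard_lt_card [Finite U] (hS : IsMutVisSet K S) (hK : K ≠ ⊤) :
    S.ncard < Nat.card U :=
  Set.ncard_lt_card fun h => hK (isMutVisSet_univ_iff.1 (h ▸ hS))

end MutualVisibility

section MobileConfig

variable {U : Type*} {K : SimpleGraph U} {P : Set U → Prop} {S : Set U} {t : ℕ}

lemma exists_eq_compl_singleton_of_ncard [Fintype U] (hS : S.ncard + 1 = Fintype.card U) :
    ∃ x, S = {x}ᶜ := by
  have : Sᶜ.ncard = 1 := by rw [Set.ncard_compl, Nat.card_eq_fintype_card]; omega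
  obtain ⟨x, hx⟩ := Set.ncard_eq_one.1 this
  exact ⟨x, compl_compl S ▸ congrArg _ hx⟩

lemma ncard_range_embedding (f : Fin t ↪ U) : (Set.range f).ncard = t := by
  rw [Set.ncard_range_of_injective f.injective, Nat.card_fin]

lemma exists_embedding_range_eq [Finite U] {s : Set U} {n : ℕ} (hs : s.ncard = n) :
    ∃ f : Fin n ↪ U, Set.range f = s := by
  let e := Finite.equivFinOfCardEq ((Nat.card_coe_set_eq s).trans hs)
  refine ⟨e.symm.toEmbedding.trans (Function.Embedding.subtype _), ?_⟩
  rw [Function.Embedding.coe_trans]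
  simp [Set.range_comp]

lemma exists_legalMove {f : Fin t ↪ U} {a b : U} (ha : a ∈ Set.range f)
    (hb : b ∉ Set.range f) (hab : K.Adj a b) (hP : P (insert b (Set.range f \ {a}))) :
    ∃ g : Fin t ↪ U, LegalMove K P f g ∧ Set.range g = insert b (Set.range f \ {a}) := by
  classical
  obtain ⟨i, rfl⟩ := ha
  have hfix : ∀ j, j ≠ i → f.setValue i b j = f j := fun j hj =>
    Function.Embedding.setValue_eq_of_ne hj fun h => hb ⟨j, h⟩
  have hrange : Set.range (f.setValue i b) = insert b (Set.range f \ {f i}) := by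
    ext v
    simp only [Set.mem_range, Set.mem_insert_iff, Set.mem_sdiff, Set.mem_singleton_iff]
    constructor
    · rintro ⟨j, rfl⟩
      by_cases hj : j = i
      · simp [hj]
      · exact Or.inr ⟨⟨j, (hfix j hj).symm⟩, by rw [hfix j hj]; exact f.injective.ne hj⟩
    · rintro (rfl | ⟨⟨j, rfl⟩, hj⟩)
      · exact ⟨i, by simp⟩
      · exact ⟨j, hfix j fun h => hj (h ▸ rfl)⟩
  exact ⟨_, ⟨i, by simpa using hab, by simpa using hb, hfix, hrange ▸ hP⟩, hrange⟩

lemma bddAbove_mobileConfigs [Fintype U] (K : SimpleGraph U) (P : Set U → Prop) :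
    BddAbove {t : ℕ | ∃ f : Fin t ↪ U, IsMobileConfig K P f} :=
  ⟨Fintype.card U, fun _ ⟨g, _⟩ => by simpa using Fintype.card_le_of_embedding g⟩

lemma le_mobMV [Fintype U] {f : Fin t ↪ U} (hf : IsMobileConfig K (IsMutVisSet K) f) :
    t ≤ mobMV K :=
  le_csSup (bddAbove_mobileConfigs K _) ⟨f, hf⟩

lemma exists_isMobileConfig_mobMV [Fintype U] (h : 0 < mobMV K) :
    ∃ f : Fin (mobMV K) ↪ U, IsMobileConfig K (IsMutVisSet K) f := by
  refine Nat.sSup_mem (Set.nonempty_iff_ne_empty.2 fun he => ?_) (bddAbove_mobileConfigs K _)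
  simp [mobMV, he] at h

lemma mobMV_le_card_sub_one [Fintype U] (hK : K ≠ ⊤) : mobMV K ≤ Fintype.card U - 1 := by
  refine csSup_le' fun t ⟨f, hf⟩ => ?_
  have := hf.1.ncard_lt_card hK
  rw [ncard_range_embedding, Nat.card_eq_fintype_card] at this
  omega

lemma exists_isMobileConfig_of_hasAdjacentHubs [Fintype U] (h : HasAdjacentHubs K) :
    ∃ f : Fin (Fintype.card U - 1) ↪ U, IsMobileConfig K (IsMutVisSet K) f := by
  obtain ⟨x, y, hxy, hx, hy⟩ := h
  obtain ⟨f, hf⟩ := exists_embedding_range_eq (s := {x}ᶜ)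
    (by rw [Set.ncard_compl, Set.ncard_singleton, Nat.card_eq_fintype_card])
  have hmove : insert x (Set.range f \ {y}) = {y}ᶜ := by
    ext v; by_cases hv : v = x <;> simp [hf, hv, hxy.ne]
  obtain ⟨g, hfg, hg⟩ := exists_legalMove (P := IsMutVisSet K) (by simpa [hf] using hxy.ne')
    (by simp [hf]) hxy.symm (hmove ▸ isMutVisSet_compl_singleton_iff.2 hy)
  refine ⟨f, hf ▸ isMutVisSet_compl_singleton_iff.2 hx, 1, fun k => if k = 0 then f else g,
    rfl, fun k hk => by simpa [Nat.lt_one_iff.1 hk] using hfg, fun v => ?_⟩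
  by_cases hv : v = x
  · obtain ⟨i, hi⟩ : v ∈ Set.range g := by simp [hg, hmove, hv, hxy.ne]
    exact ⟨1, le_rfl, i, by simpa using hi⟩
  · obtain ⟨i, hi⟩ : v ∈ Set.range f := by simpa [hf] using hv
    exact ⟨0, Nat.zero_le _, i, by simpa using hi⟩

lemma IsMobileConfig.hasAdjacentHubs [Fintype U] {f : Fin t ↪ U}
    (hf : IsMobileConfig K (IsMutVisSet K) f) (ht : t + 1 = Fintype.card U) :
    HasAdjacentHubs K := by
  have hcard : ∀ g : Fin t ↪ U, (Set.range g).ncard + 1 = Fintype.card U := fun g => by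
    rw [ncard_range_embedding, ht]
  obtain ⟨hmv₀, N, c, rfl, hmoves, hvisit⟩ := hf
  obtain ⟨x, hx⟩ := exists_eq_compl_singleton_of_ncard (hcard (c 0))
  have hN : 0 < N := by
    obtain ⟨k, hk, i, hki⟩ := hvisit x
    rcases Nat.eq_zero_or_pos k with rfl | hk0
    · exact absurd (hx ▸ ⟨i, hki⟩ : x ∈ ({x}ᶜ : Set U)) (by simp)
    · omega
  obtain ⟨i, hadj, hnew, hfix, hmv₁⟩ := hmoves 0 hN
  have hix : c 1 i = x := by simpa [hx] using hnew
  obtain ⟨y, hy⟩ := exists_eq_compl_singleton_of_ncard (hcard (c 1))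
  have hiy : c 0 i = y := by
    by_contra hne
    obtain ⟨j, hj⟩ : c 0 i ∈ Set.range (c 1) := by simpa [hy] using hne
    by_cases hji : j = i
    · subst hji
      exact absurd (hx ▸ ⟨j, rfl⟩ : c 0 j ∈ ({x}ᶜ : Set U)) (by simp [← hj, hix])
    · exact hji ((c 0).injective (hfix j hji ▸ hj))
  refine ⟨y, x, hiy ▸ hix ▸ hadj, ?_, ?_⟩
  · exact isMutVisSet_compl_singleton_iff.1 (hy ▸ hmv₁)
  · exact isMutVisSet_compl_singleton_iff.1 (hx ▸ hmv₀)

lemma card_sub_one_le_mobMV_iff [Fintype U] (hU : 2 ≤ Fintype.card U) :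
    Fintype.card U - 1 ≤ mobMV K ↔ HasAdjacentHubs K := by
  refine ⟨fun h => ?_, fun h => ?_⟩
  · by_cases hK : K = ⊤
    · have : Nontrivial U := Fintype.one_lt_card_iff_nontrivial.1 hU
      exact hK ▸ hasAdjacentHubs_top
    have heq : mobMV K = Fintype.card U - 1 := le_antisymm (mobMV_le_card_sub_one hK) h
    obtain ⟨f, hf⟩ := exists_isMobileConfig_mobMV (K := K) (by omega)
    exact hf.hasAdjacentHubs (by omega)
  · obtain ⟨f, hf⟩ := exists_isMobileConfig_of_hasAdjacentHubs h
    exact le_mobMV hf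

end MobileConfig

section MutualVisibilityNumber

variable {U : Type*} {K : SimpleGraph U}

lemma bddAbove_mutVisSetCards [Finite U] (K : SimpleGraph U) :
    BddAbove {n : ℕ | ∃ S : Set U, IsMutVisSet K S ∧ S.ncard = n} :=
  ⟨Nat.card U, fun _ ⟨S, _, hS⟩ => hS ▸ Set.ncard_le_card S⟩

lemma muMV_eq_card_sub_one_iff [Fintype U] [Nonempty U] :
    muMV K = Fintype.card U - 1 ↔ K ≠ ⊤ ∧ ∃ x, IsHub K x := by
  have hpos := Fintype.card_pos (α := U)
  refine ⟨fun h => ⟨fun hK => ?_, ?_⟩, fun ⟨hK, x, hx⟩ => le_antisymm ?_ ?_⟩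
  · have : (Set.univ : Set U).ncard ≤ muMV K :=
      le_csSup (bddAbove_mutVisSetCards K) ⟨Set.univ, isMutVisSet_univ_iff.2 hK, rfl⟩
    rw [Set.ncard_univ, Nat.card_eq_fintype_card] at this
    omega
  · have hne : {n : ℕ | ∃ S : Set U, IsMutVisSet K S ∧ S.ncard = n}.Nonempty :=
      ⟨0, ∅, fun _ h => h.elim, Set.ncard_empty U⟩
    obtain ⟨S, hS, hcard⟩ := Nat.sSup_mem hne (bddAbove_mutVisSetCards K)
    obtain ⟨x, rfl⟩ := exists_eq_compl_singleton_of_ncard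
      (show S.ncard + 1 = Fintype.card U by rw [hcard, ← muMV, h]; omega)
    exact ⟨x, isMutVisSet_compl_singleton_iff.1 hS⟩
  · refine csSup_le' fun n ⟨S, hS, hn⟩ => ?_
    have := hS.ncard_lt_card hK
    rw [Nat.card_eq_fintype_card] at this
    omega
  · refine le_csSup (bddAbove_mutVisSetCards K) ⟨{x}ᶜ, isMutVisSet_compl_singleton_iff.2 hx, ?_⟩
    rw [Set.ncard_compl, Set.ncard_singleton, Nat.card_eq_fintype_card]

end MutualVisibilityNumber

lemma SimpleGraph.Preconnected.ne_bot_of_nontrivial {U : Type*} [Nontrivial U]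
    {K : SimpleGraph U} (hK : K.Preconnected) : K ≠ ⊥ :=
  ne_bot_iff_exists_adj.2 ⟨_, hK.exists_adj_of_nontrivial (Classical.arbitrary U)⟩

section Join

open Sum

variable {G : SimpleGraph V} {H : SimpleGraph W}

@[simp] lemma graphJoin_adj_inl_inl {a b : V} : (graphJoin G H).Adj (inl a) (inl b) ↔ G.Adj a b :=
  Iff.rfl

@[simp] lemma graphJoin_adj_inr_inr {a b : W} : (graphJoin G H).Adj (inr a) (inr b) ↔ H.Adj a b :=
  Iff.rfl

@[simp] lemma graphJoin_adj_inl_inr {a : V} {b : W} : (graphJoin G H).Adj (inl a) (inr b) :=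
  trivial

@[simp] lemma graphJoin_adj_inr_inl {a : W} {b : V} : (graphJoin G H).Adj (inr a) (inl b) :=
  trivial

lemma graphJoin_eq_top_iff : graphJoin G H = ⊤ ↔ G = ⊤ ∧ H = ⊤ := by
  refine ⟨fun h => ⟨?_, ?_⟩, fun ⟨hG, hH⟩ => ?_⟩
  · ext u v
    simpa [graphJoin] using congrArg (fun K => K.Adj (inl u) (inl v)) h
  · ext u v
    simpa [graphJoin] using congrArg (fun K => K.Adj (inr u) (inr v)) h
  · ext (a | a) (b | b) <;> simp [graphJoin, hG, hH]

lemma isHub_graphJoin_inl_iff {x : V} : IsHub (graphJoin G H) (inl x) ↔ IsHub G x := by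
  refine ⟨fun h a b ha hb hab hna => @h (inl a) (inl b) (by simpa) (by simpa) (by simpa) hna, ?_⟩
  rintro hx (a | a) (b | b) ha hb hab hna
  · exact hx (by simpa using ha) (by simpa using hb) (by simpa using hab) hna
  exacts [absurd trivial hna, absurd trivial hna, ⟨trivial, trivial⟩]

lemma isHub_graphJoin_inr_iff {y : W} : IsHub (graphJoin G H) (inr y) ↔ IsHub H y := by
  refine ⟨fun h a b ha hb hab hna => @h (inr a) (inr b) (by simpa) (by simpa) (by simpa) hna, ?_⟩
  rintro hy (a | a) (b | b) ha hb hab hna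
  · exact ⟨trivial, trivial⟩
  exacts [absurd trivial hna, absurd trivial hna,
    hy (by simpa using ha) (by simpa using hb) (by simpa using hab) hna]

lemma hasAdjacentHubs_graphJoin_iff :
    HasAdjacentHubs (graphJoin G H) ↔
      HasAdjacentHubs G ∨ HasAdjacentHubs H ∨ ((∃ x, IsHub G x) ∧ ∃ y, IsHub H y) := by
  constructor
  · rintro ⟨a | a, b | b, hab, ha, hb⟩ <;>
      simp only [isHub_graphJoin_inl_iff, isHub_graphJoin_inr_iff] at ha hb
    exacts [Or.inl ⟨a, b, hab, ha, hb⟩, Or.inr (Or.inr ⟨⟨a, ha⟩, b, hb⟩),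
      Or.inr (Or.inr ⟨⟨b, hb⟩, a, ha⟩), Or.inr (Or.inl ⟨a, b, hab, ha, hb⟩)]
  · rintro (⟨a, b, hab, ha, hb⟩ | ⟨a, b, hab, ha, hb⟩ | ⟨⟨x, hx⟩, y, hy⟩)
    · exact ⟨inl a, inl b, hab, isHub_graphJoin_inl_iff.2 ha, isHub_graphJoin_inl_iff.2 hb⟩
    · exact ⟨inr a, inr b, hab, isHub_graphJoin_inr_iff.2 ha, isHub_graphJoin_inr_iff.2 hb⟩
    · exact ⟨inl x, inr y, trivial, isHub_graphJoin_inl_iff.2 hx, isHub_graphJoin_inr_iff.2 hy⟩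

/-- Two vertices on the same side have the free vertex of the other side as a common
neighbour. -/
lemma isMutVisSet_graphJoin_compl_pair (x : V) (y : W) :
    IsMutVisSet (graphJoin G H) {inl x, inr y}ᶜ := by
  refine isMutVisSet_of_forall_exists_common_adj ?_
  rintro (a | a) - (b | b) - - hna
  exacts [⟨inr y, by simp, trivial, trivial⟩, absurd trivial hna, absurd trivial hna,
    ⟨inl x, by simp, trivial, trivial⟩]

lemma card_add_card_sub_two_le_mobMV_graphJoin [Fintype V] [Fintype W] (hG : G ≠ ⊥)
    (hH : H ≠ ⊥) : Fintype.card V + Fintype.card W - 2 ≤ mobMV (graphJoin G H) := by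
  obtain ⟨x', x, hx⟩ := ne_bot_iff_exists_adj.1 hG
  obtain ⟨y', y, hy⟩ := ne_bot_iff_exists_adj.1 hH
  obtain ⟨f, hf⟩ := exists_embedding_range_eq (s := {inl x, inr y}ᶜ)
    (n := Fintype.card (V ⊕ W) - 2)
    (by rw [Set.ncard_compl, Set.ncard_pair (by simp), Nat.card_eq_fintype_card])
  have hfg : insert (inl x) (Set.range f \ {inl x'}) = {inl x', inr y}ᶜ := by
    ext v; by_cases hv : v = inl x <;> simp [hf, hv, hx.ne', and_comm]
  obtain ⟨g, hmove₁, hg⟩ := exists_legalMove (P := IsMutVisSet (graphJoin G H))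
    (by simp [hf, hx.ne]) (by simp [hf]) (graphJoin_adj_inl_inl.2 hx)
    (hfg ▸ isMutVisSet_graphJoin_compl_pair x' y)
  have hge : insert (inr y) (Set.range g \ {inr y'}) = {inl x', inr y'}ᶜ := by
    ext v; by_cases hv : v = inr y <;> simp [hg, hfg, hv, hy.ne', or_comm]
  obtain ⟨e, hmove₂, he⟩ := exists_legalMove (P := IsMutVisSet (graphJoin G H))
    (by simp [hg, hfg, hy.ne]) (by simp [hg, hfg])
    (graphJoin_adj_inr_inr.2 hy) (hge ▸ isMutVisSet_graphJoin_compl_pair x' y')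
  have hmob : IsMobileConfig (graphJoin G H) (IsMutVisSet (graphJoin G H)) f := by
    refine ⟨hf ▸ isMutVisSet_graphJoin_compl_pair x y, 2,
      fun k => if k = 0 then f else if k = 1 then g else e, rfl, ?_, fun v => ?_⟩
    · intro k hk
      interval_cases k
      exacts [by simpa using hmove₁, by simpa using hmove₂]
    by_cases hvx : v = inl x
    · obtain ⟨i, hi⟩ : v ∈ Set.range g := by simp [hg, hfg, hvx, hx.ne']
      exact ⟨1, by omega, i, by simpa using hi⟩
    by_cases hvy : v = inr y
    · obtain ⟨i, hi⟩ : v ∈ Set.range e := by simp [he, hge, hvy, hy.ne']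
      exact ⟨2, le_rfl, i, by simpa using hi⟩
    · obtain ⟨i, hi⟩ : v ∈ Set.range f := by simp [hf, hvx, hvy]
      exact ⟨0, by omega, i, by simpa using hi⟩
  simpa using le_mobMV hmob

end Join

theorem stmt_5 {V W : Type*} [Fintype V] [Fintype W] (G : SimpleGraph V)
    (H : SimpleGraph W) (hG : G.Connected) (hH : H.Connected)
    (hV : 2 ≤ Fintype.card V) (hW : 2 ≤ Fintype.card W) (hnc : ¬(G = ⊤ ∧ H = ⊤)) :
    (mobMV (graphJoin G H) = Fintype.card V + Fintype.card W - 1 ↔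
      ((Fintype.card V - 1 ≤ mobMV G ∨ Fintype.card W - 1 ≤ mobMV H) ∨
        (muMV G = Fintype.card V - 1 ∧ muMV H = Fintype.card W - 1))) ∧
    (¬((Fintype.card V - 1 ≤ mobMV G ∨ Fintype.card W - 1 ≤ mobMV H) ∨
        (muMV G = Fintype.card V - 1 ∧ muMV H = Fintype.card W - 1)) →
      mobMV (graphJoin G H) = Fintype.card V + Fintype.card W - 2) := by
  have : Nontrivial V := Fintype.one_lt_card_iff_nontrivial.1 hV
  have : Nontrivial W := Fintype.one_lt_card_iff_nontrivial.1 hW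
  -- a complete factor has adjacent hubs, so the `≠ ⊤` clauses of the `μ` condition drop out
  have hG_top : G = ⊤ → HasAdjacentHubs G := fun h => h ▸ hasAdjacentHubs_top
  have hH_top : H = ⊤ → HasAdjacentHubs H := fun h => h ▸ hasAdjacentHubs_top
  have hcond : ((Fintype.card V - 1 ≤ mobMV G ∨ Fintype.card W - 1 ≤ mobMV H) ∨
      (muMV G = Fintype.card V - 1 ∧ muMV H = Fintype.card W - 1)) ↔
      HasAdjacentHubs (graphJoin G H) := by
    rw [card_sub_one_le_mobMV_iff hV, card_sub_one_le_mobMV_iff hW, muMV_eq_card_sub_one_iff,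
      muMV_eq_card_sub_one_iff, hasAdjacentHubs_graphJoin_iff]
    tauto
  have hcard : Fintype.card (V ⊕ W) = Fintype.card V + Fintype.card W := Fintype.card_sum
  have hupper := mobMV_le_card_sub_one (mt graphJoin_eq_top_iff.1 hnc)
  have hlower := card_add_card_sub_two_le_mobMV_graphJoin hG.preconnected.ne_bot_of_nontrivial
    hH.preconnected.ne_bot_of_nontrivial
  rw [hcard] at hupper
  rw [hcond, ← card_sub_one_le_mobMV_iff (by omega), hcard]
  omega
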